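/- arXiv:2112.14888 — 3 statements merged into one kernel-verified Lean document; each statement's English description precedes it below -/
import Mathlib

section
/- Let n ≥ 1, let A ∈ ℝ^{n×n} be a left stochastic matrix, and let γ ∈ [0,1). Then the matrix (1−γ)·(I_n − γ·A)^{-1} is left stochastic. -/
open Matrix
open scoped NNReal

/-- A square real matrix is left stochastic if each of its columns lies in the
probability simplex (entries nonnegative, columns summing to 1). -/
def LeftStochastic {n : ℕ} (M : Matrix (Fin n) (Fin n) ℝ) : Prop :=
  ∀ j, (fun i => M i j) ∈ stdSimplex ℝ (Fin n)

attribute [local instance] Matrix.linftyOpNormedRing Matrix.linftyOpNormedSpace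

theorem stmt_5 (n : ℕ) (hn : 1 ≤ n) (A : Matrix (Fin n) (Fin n) ℝ)
    (hA : LeftStochastic A) (γ : ℝ) (hγ : γ ∈ Set.Ico (0:ℝ) 1) :
    LeftStochastic ((1 - γ) • ((1 : Matrix (Fin n) (Fin n) ℝ) - γ • A)⁻¹) := by
  obtain ⟨hγ0, hγ1⟩ := hγ
  have hne : Nonempty (Fin n) := Fin.pos_iff_nonempty.mp hn
  set M : Matrix (Fin n) (Fin n) ℝ := γ • Aᵀ with hMdef
  -- norm of Aᵀ is 1
  have hrow : ∀ i, (∑ j, ‖Aᵀ i j‖₊ : ℝ≥0) = 1 := by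
    intro i
    have h : ((∑ j, ‖Aᵀ i j‖₊ : ℝ≥0) : ℝ) = 1 := by
      push_cast
      simp only [Matrix.transpose_apply, coe_nnnorm, Real.norm_eq_abs]
      rw [Finset.sum_congr rfl fun j _ => abs_of_nonneg ((hA i).1 j)]
      exact (hA i).2
    exact_mod_cast h
  have hAt : ‖(Aᵀ : Matrix (Fin n) (Fin n) ℝ)‖ = 1 := by
    rw [Matrix.linfty_opNorm_def]
    have : (Finset.univ.sup fun i => ∑ j, ‖Aᵀ i j‖₊) = 1 := by
      rw [Finset.sup_congr rfl fun i _ => hrow i]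
      exact Finset.sup_const Finset.univ_nonempty 1
    rw [this]; norm_num
  have hM : ‖M‖ < 1 := by
    rw [hMdef, norm_smul, hAt, Real.norm_eq_abs, abs_of_nonneg hγ0, mul_one]
    exact hγ1
  -- entries of M and its powers are nonnegative
  have hMnn : ∀ i j, 0 ≤ M i j := by
    intro i j
    exact mul_nonneg hγ0 ((hA i).1 j)
  have hMpow : ∀ k, ∀ i j, 0 ≤ (M ^ k) i j := by
    intro k
    induction k with
    | zero => intro i j; rw [pow_zero, Matrix.one_apply]; positivity
    | succ k ih =>
      intro i j
      rw [pow_succ, Matrix.mul_apply]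
      exact Finset.sum_nonneg fun l _ => mul_nonneg (ih i l) (hMnn l j)
  -- entries of (1 - M)⁻¹ are nonnegative via the geometric series
  have hentry : ∀ i j, 0 ≤ Ring.inverse ((1 : Matrix (Fin n) (Fin n) ℝ) - M) i j := by
    intro i j
    let f : Matrix (Fin n) (Fin n) ℝ →ₗ[ℝ] ℝ :=
      { toFun := fun X => X i j, map_add' := fun _ _ => rfl, map_smul' := fun _ _ => rfl }
    have h2 := (hasSum_geom_series_inverse M hM).mapL (LinearMap.toContinuousLinearMap f)
    exact hasSum_le (fun k => hMpow k i j) hasSum_zero h2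
  have hUnitT : IsUnit ((1 : Matrix (Fin n) (Fin n) ℝ) - M) :=
    isUnit_one_sub_of_norm_lt_one hM
  set B : Matrix (Fin n) (Fin n) ℝ := (1 : Matrix (Fin n) (Fin n) ℝ) - γ • A with hBdef
  have hBt : Bᵀ = (1 : Matrix (Fin n) (Fin n) ℝ) - M := by
    rw [hBdef, hMdef, Matrix.transpose_sub, Matrix.transpose_smul, Matrix.transpose_one]
  have hdet : IsUnit B.det := by
    have h1 : IsUnit Bᵀ.det := (Matrix.isUnit_iff_isUnit_det _).mp (hBt ▸ hUnitT)
    rwa [Matrix.det_transpose] at h1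
  have hBinv_nn : ∀ i j, 0 ≤ B⁻¹ i j := by
    intro i j
    have h1 : B⁻¹ = (((1 : Matrix (Fin n) (Fin n) ℝ) - M)⁻¹)ᵀ := by
      rw [← hBt, Matrix.transpose_nonsing_inv, Matrix.transpose_transpose]
    rw [h1, Matrix.transpose_apply, Matrix.nonsing_inv_eq_ringInverse]
    exact hentry j i
  have hmul : B * B⁻¹ = 1 := Matrix.mul_nonsing_inv B hdet
  have hsumB : ∀ k, ∑ i, B i k = 1 - γ := by
    intro k
    have : ∑ i, B i k = ∑ i, ((1 : Matrix (Fin n) (Fin n) ℝ) i k - γ * A i k) := rfl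
    rw [this, Finset.sum_sub_distrib, ← Finset.mul_sum, (hA k).2, mul_one]
    congr 1
    simp [Matrix.one_apply]
  have hcolsum : ∀ j, ∑ i, (1 - γ) * B⁻¹ i j = 1 := by
    intro j
    have h1 : ∑ i, (B * B⁻¹) i j = 1 := by
      rw [hmul]; simp [Matrix.one_apply]
    have h2 : ∑ i, (B * B⁻¹) i j = ∑ k, (1 - γ) * B⁻¹ k j := by
      simp_rw [Matrix.mul_apply]
      rw [Finset.sum_comm]
      exact Finset.sum_congr rfl fun k _ => by rw [← Finset.sum_mul, hsumB]
    rw [← h2]; exact h1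
  intro j
  refine ⟨fun i => ?_, ?_⟩
  · show 0 ≤ (1 - γ) * B⁻¹ i j
    exact mul_nonneg (by linarith) (hBinv_nn i j)
  · show ∑ i, (1 - γ) * B⁻¹ i j = 1
    exact hcolsum j
end

section
/- Let n ≥ 1, let A ∈ ℝ^{n×n} be a left stochastic matrix, and let γ ∈ [0,1). Then the steady state x* = ((1−γ)/n)·(I_n − γ·A)^{-1}·𝟙 lies in the probability simplex Δ. -/
/-!
Write `B = 1 - γ A`. If `B x ≥ 0`, the negative part `y` of `x` satisfies `y ≤ γ A y`
entrywise; summing and using that `A` preserves sums gives `∑ y ≤ γ ∑ y`, so `y = 0`.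
So `B x ≥ 0` forces `x ≥ 0`; in particular `B` is injective, hence invertible, and
`B⁻¹ 𝟙 ≥ 0`. Finally `𝟙ᵀ B = (1 - γ) 𝟙ᵀ`, so the entries of `B⁻¹ 𝟙` sum to `n / (1 - γ)`.
-/

open Matrix

namespace Matrix

variable {R ι : Type*} [Field R] [LinearOrder R] [IsStrictOrderedRing R] [Fintype ι]
  [DecidableEq ι] {M : Matrix ι ι R} {γ : R}

theorem sum_one_sub_smul_mulVec_of_mem_colStochastic (hM : M ∈ colStochastic R ι)
    (x : ι → R) : ∑ i, ((1 - γ • M) *ᵥ x) i = (1 - γ) * ∑ i, x i := by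
  simp only [sub_mulVec, one_mulVec, smul_mulVec, Pi.sub_apply, Pi.smul_apply, smul_eq_mul,
    Finset.sum_sub_distrib, ← Finset.mul_sum, sum_mulVec_of_mem_colStochastic hM]
  ring

theorem nonneg_of_nonneg_one_sub_smul_mulVec (hM : M ∈ colStochastic R ι) (hγ₀ : 0 ≤ γ)
    (hγ₁ : γ < 1) {x : ι → R} (hx : 0 ≤ (1 - γ • M) *ᵥ x) : 0 ≤ x := by
  set y : ι → R := fun k => max (-x k) 0
  have hy : ∀ k, 0 ≤ y k := fun k => le_max_right _ _
  have hy_le : ∀ i, y i ≤ γ * (M *ᵥ y) i := by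
    intro i
    have hMx : γ * (M *ᵥ x) i ≤ x i := by
      simpa [sub_mulVec, smul_mulVec, sub_nonneg] using hx i
    have hMxy : 0 ≤ (M *ᵥ x) i + (M *ᵥ y) i := by
      rw [← Pi.add_apply, ← mulVec_add]
      exact nonneg_mulVec_of_mem_colStochastic hM
        (fun k => neg_le_iff_add_nonneg'.1 (le_max_left (-x k) 0)) i
    exact max_le (by nlinarith) (mul_nonneg hγ₀ (nonneg_mulVec_of_mem_colStochastic hM hy i))
  have hsum : ∑ k, y k ≤ γ * ∑ k, y k := by
    calc ∑ k, y k ≤ ∑ i, γ * (M *ᵥ y) i := Finset.sum_le_sum fun i _ => hy_le i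
      _ = γ * ∑ k, y k := by rw [← Finset.mul_sum, sum_mulVec_of_mem_colStochastic hM]
  have hsum_zero : ∑ k, y k = 0 := by
    nlinarith [Finset.sum_nonneg fun k (_ : k ∈ Finset.univ) => hy k]
  intro k
  show 0 ≤ x k
  have hyk : y k = 0 :=
    (Finset.sum_eq_zero_iff_of_nonneg fun k _ => hy k).1 hsum_zero k (Finset.mem_univ k)
  linarith [le_max_left (-x k) 0]

theorem isUnit_one_sub_smul_of_mem_colStochastic (hM : M ∈ colStochastic R ι) (hγ₀ : 0 ≤ γ)
    (hγ₁ : γ < 1) : IsUnit (1 - γ • M) := by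
  refine mulVec_injective_iff_isUnit.1 fun x y hxy => ?_
  have hle : ∀ {u v : ι → R}, (1 - γ • M) *ᵥ u = (1 - γ • M) *ᵥ v → v ≤ u := fun huv =>
    sub_nonneg.1 <| nonneg_of_nonneg_one_sub_smul_mulVec hM hγ₀ hγ₁ <| by
      rw [mulVec_sub, huv, sub_self]
  exact le_antisymm (hle hxy.symm) (hle hxy)

end Matrix

theorem LeftStochastic.mem_colStochastic {n : ℕ} {A : Matrix (Fin n) (Fin n) ℝ}
    (hA : LeftStochastic A) : A ∈ colStochastic ℝ (Fin n) :=
  mem_colStochastic_iff_sum.2 ⟨fun i j => (hA j).1 i, fun j => (hA j).2⟩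

theorem stmt_7 (n : ℕ) (hn : 1 ≤ n) (A : Matrix (Fin n) (Fin n) ℝ)
    (hA : LeftStochastic A) (γ : ℝ) (hγ : γ ∈ Set.Ico (0:ℝ) 1) :
    ((1 - γ) / n) • ((((1 : Matrix (Fin n) (Fin n) ℝ) - γ • A)⁻¹) *ᵥ fun _ => (1:ℝ))
      ∈ stdSimplex ℝ (Fin n) := by
  obtain ⟨hγ₀, hγ₁⟩ := hγ
  have hM := hA.mem_colStochastic
  have hunit := isUnit_one_sub_smul_of_mem_colStochastic hM hγ₀ hγ₁
  set x := (1 - γ • A)⁻¹ *ᵥ fun _ => (1 : ℝ)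
  have hx : (1 - γ • A) *ᵥ x = fun _ => 1 := by
    rw [mulVec_mulVec, mul_nonsing_inv _ ((isUnit_iff_isUnit_det _).1 hunit), one_mulVec]
  have hx₀ : 0 ≤ x := nonneg_of_nonneg_one_sub_smul_mulVec hM hγ₀ hγ₁ (hx ▸ fun _ => zero_le_one)
  have hsum : (1 - γ) * ∑ i, x i = n := by
    simpa [hx] using (sum_one_sub_smul_mulVec_of_mem_colStochastic (γ := γ) hM x).symm
  refine ⟨fun i => mul_nonneg (div_nonneg (sub_nonneg.2 hγ₁.le) n.cast_nonneg) (hx₀ i), ?_⟩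
  simp only [Pi.smul_apply, smul_eq_mul]
  rw [← Finset.mul_sum, div_mul_eq_mul_div, hsum]
  exact div_self (Nat.cast_pos.2 hn).ne'
end

section
/- Let n ≥ 1, let A ∈ ℝ^{n×n} be the averaging matrix with all entries 1/n, let B ∈ ℝ^{n×n} be left stochastic, let γ ∈ [0,1], let T ≥ 1, let Q, Q_f, R ∈ ℝ^{n×n}, and let x₀ ∈ Δ. For controls u₀,…,u_{T−1} ∈ Δ and states generated by x_{t+1} = γ·A·x_t + (1−γ)·B·u_t, the total cost Σ_{t=0}^{T−1}(x_tᵀQx_t + u_tᵀRu_t) + x_TᵀQ_f x_T equals x₀ᵀQx₀ + Σ_{t=0}^{T−2} g_Q(u_t) + g_{Q_f}(u_{T−1}), where for a matrix M, g_M(u) = ((γ/n)·𝟙 + (1−γ)·B·u)ᵀ M ((γ/n)·𝟙 + (1−γ)·B·u) + uᵀRu. Consequently, the infimum of the total cost over all (u₀,…,u_{T−1}) ∈ Δ^T equals x₀ᵀQx₀ + (T−1)·inf_{u∈Δ} g_Q(u) + inf_{u∈Δ} g_{Q_f}(u). -/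
/-! The averaging matrix maps every vector of mass one to `(1/n)·𝟙`, and a left stochastic `B`
preserves mass, so all states have mass one and `x_{t+1} = (γ/n)·𝟙 + (1−γ)·B·u_t` depends on
`u_t` alone. Grouping `x_{t+1}ᵀQx_{t+1}` with `u_tᵀRu_t` turns the cost into a sum of terms in
independent variables; each is continuous on the compact simplex, so repeating minimisers of
`g_Q` and `g_{Q_f}` attains the infimum. -/

open Matrix

/-- The per-round cost `g_M(u) = ((γ/n)·𝟙 + (1−γ)·B·u)ᵀ M ((γ/n)·𝟙 + (1−γ)·B·u) + uᵀRu`. -/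
noncomputable def g {n : ℕ} (γ : ℝ) (B R M : Matrix (Fin n) (Fin n) ℝ) (u : Fin n → ℝ) : ℝ :=
  ((γ / n) • (fun _ => (1:ℝ)) + (1 - γ) • (B *ᵥ u)) ⬝ᵥ
      (M *ᵥ ((γ / n) • (fun _ => (1:ℝ)) + (1 - γ) • (B *ᵥ u)))
    + u ⬝ᵥ (R *ᵥ u)

/-- Total LQR cost `Σ_{t<T} (x_tᵀQx_t + u_tᵀRu_t) + x_TᵀQ_f x_T`. -/
noncomputable def totalCost {n : ℕ} (T : ℕ) (Q Qf R : Matrix (Fin n) (Fin n) ℝ)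
    (x u : ℕ → Fin n → ℝ) : ℝ :=
  (∑ t ∈ Finset.range T, (x t ⬝ᵥ (Q *ᵥ x t) + u t ⬝ᵥ (R *ᵥ u t))) + x T ⬝ᵥ (Qf *ᵥ x T)

theorem Matrix.sum_mulVec_of_sum_col_eq_one {ι : Type*} [Fintype ι] {B : Matrix ι ι ℝ}
    (hB : ∀ j, ∑ i, B i j = 1) (u : ι → ℝ) : ∑ i, (B *ᵥ u) i = ∑ i, u i := by
  simp only [mulVec, dotProduct]
  rw [Finset.sum_comm]
  simp [← Finset.sum_mul, hB]

theorem Matrix.of_const_mulVec {ι : Type*} [Fintype ι] (c : ℝ) (x : ι → ℝ) :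
    (of fun _ _ => c : Matrix ι ι ℝ) *ᵥ x = fun _ => c * ∑ i, x i := by
  ext i
  simp [mulVec, dotProduct, Finset.mul_sum]

theorem continuous_g {n : ℕ} (γ : ℝ) (B R M : Matrix (Fin n) (Fin n) ℝ) :
    Continuous (g γ B R M) := by
  unfold g
  simp only [dotProduct, mulVec, Pi.add_apply, Pi.smul_apply, smul_eq_mul]
  fun_prop

section Dynamics

variable {n : ℕ} {γ : ℝ} {B : Matrix (Fin n) (Fin n) ℝ}

theorem averaging_step_eq {x : Fin n → ℝ} (hx : ∑ i, x i = 1) (u : Fin n → ℝ) :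
    γ • ((of fun _ _ => (n : ℝ)⁻¹ : Matrix (Fin n) (Fin n) ℝ) *ᵥ x) + (1 - γ) • (B *ᵥ u)
      = (γ / n) • (fun _ => (1 : ℝ)) + (1 - γ) • (B *ᵥ u) := by
  rw [of_const_mulVec, hx]
  congr 1
  ext
  simp [div_eq_mul_inv]

theorem sum_averaging_step_eq_one (hB : ∀ j, ∑ i, B i j = 1) {x u : Fin n → ℝ}
    (hx : ∑ i, x i = 1) (hu : ∑ i, u i = 1) :
    ∑ i, ((γ / n) • (fun _ => (1 : ℝ)) + (1 - γ) • (B *ᵥ u) : Fin n → ℝ) i = 1 := by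
  have hn : (n : ℝ) ≠ 0 := by
    rintro hn
    obtain rfl : n = 0 := by exact_mod_cast hn
    simp at hx
  simp only [Pi.add_apply, Pi.smul_apply, smul_eq_mul, Finset.sum_add_distrib,
    ← Finset.mul_sum, sum_mulVec_of_sum_col_eq_one hB, hu, Finset.sum_const, Finset.card_univ,
    Fintype.card_fin, nsmul_eq_mul, mul_one]
  field_simp
  ring

theorem state_succ_eq (hB : ∀ j, ∑ i, B i j = 1) {T : ℕ} {u x : ℕ → Fin n → ℝ}
    (hu : ∀ t, t < T → ∑ i, u t i = 1) (hx₀ : ∑ i, x 0 i = 1)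
    (hrec : ∀ t, t < T → x (t + 1) =
      γ • ((of fun _ _ => (n : ℝ)⁻¹ : Matrix (Fin n) (Fin n) ℝ) *ᵥ x t) + (1 - γ) • (B *ᵥ u t))
    {t : ℕ} (ht : t < T) :
    x (t + 1) = (γ / n) • (fun _ => (1 : ℝ)) + (1 - γ) • (B *ᵥ u t) := by
  have hsum : ∀ t, t ≤ T → ∑ i, x t i = 1 := by
    intro t
    induction t with
    | zero => exact fun _ => hx₀
    | succ t ih =>
      intro ht
      rw [hrec t ht, averaging_step_eq (ih (Nat.le_of_succ_le ht))]
      exact sum_averaging_step_eq_one hB (ih (Nat.le_of_succ_le ht)) (hu t ht)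
  rw [hrec t ht, averaging_step_eq (hsum t ht.le)]

end Dynamics

theorem totalCost_succ {n : ℕ} (N : ℕ) (Q Qf R : Matrix (Fin n) (Fin n) ℝ)
    (x u : ℕ → Fin n → ℝ) :
    totalCost (N + 1) Q Qf R x u = x 0 ⬝ᵥ (Q *ᵥ x 0)
      + ∑ t ∈ Finset.range N, (x (t + 1) ⬝ᵥ (Q *ᵥ x (t + 1)) + u t ⬝ᵥ (R *ᵥ u t))
      + (x (N + 1) ⬝ᵥ (Qf *ᵥ x (N + 1)) + u N ⬝ᵥ (R *ᵥ u N)) := by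
  rw [totalCost, Finset.sum_add_distrib, Finset.sum_range_succ' (fun t => x t ⬝ᵥ (Q *ᵥ x t)),
    Finset.sum_range_succ (fun t => u t ⬝ᵥ (R *ᵥ u t)), Finset.sum_add_distrib]
  ring

theorem totalCost_succ_eq_sum_g {n : ℕ} {γ : ℝ} {B : Matrix (Fin n) (Fin n) ℝ} (N : ℕ)
    (Q Qf R : Matrix (Fin n) (Fin n) ℝ) {x u : ℕ → Fin n → ℝ}
    (hstep : ∀ t, t < N + 1 → x (t + 1) = (γ / n) • (fun _ => (1 : ℝ)) + (1 - γ) • (B *ᵥ u t)) :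
    totalCost (N + 1) Q Qf R x u =
      x 0 ⬝ᵥ (Q *ᵥ x 0) + ∑ t ∈ Finset.range N, g γ B R Q (u t) + g γ B R Qf (u N) := by
  rw [totalCost_succ, g, ← hstep N N.lt_succ_self]
  congr 2
  refine Finset.sum_congr rfl fun t ht => ?_
  rw [g, ← hstep t ((Finset.mem_range.mp ht).trans N.lt_succ_self)]

theorem totalCost_succ_eq_sum_g_of_leftStochastic {n : ℕ} {γ : ℝ}
    {B : Matrix (Fin n) (Fin n) ℝ} (hB : LeftStochastic B) (N : ℕ)
    (Q Qf R : Matrix (Fin n) (Fin n) ℝ) {x₀ : Fin n → ℝ} (hx₀ : x₀ ∈ stdSimplex ℝ (Fin n))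
    {u x : ℕ → Fin n → ℝ} (hu : ∀ t, t < N + 1 → u t ∈ stdSimplex ℝ (Fin n)) (hx0 : x 0 = x₀)
    (hrec : ∀ t, t < N + 1 → x (t + 1) =
      γ • ((of fun _ _ => (n : ℝ)⁻¹ : Matrix (Fin n) (Fin n) ℝ) *ᵥ x t) + (1 - γ) • (B *ᵥ u t)) :
    totalCost (N + 1) Q Qf R x u =
      x₀ ⬝ᵥ (Q *ᵥ x₀) + ∑ t ∈ Finset.range N, g γ B R Q (u t) + g γ B R Qf (u N) := by
  subst hx0
  exact totalCost_succ_eq_sum_g N Q Qf R fun t ht =>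
    state_succ_eq (fun j => (hB j).2) (fun t ht => (hu t ht).2) hx₀.2 hrec ht

theorem isLeast_add_sum_add {α : Type*} {K : Set α} {f h : α → ℝ} {a b : α}
    (ha : a ∈ K) (hfa : ∀ y ∈ K, f a ≤ f y) (hb : b ∈ K) (hhb : ∀ y ∈ K, h b ≤ h y)
    (c₀ : ℝ) (N : ℕ) :
    IsLeast {c | ∃ u : ℕ → α, (∀ t, t < N + 1 → u t ∈ K) ∧
        c = c₀ + ∑ t ∈ Finset.range N, f (u t) + h (u N)}
      (c₀ + N * f a + h b) := by
  constructor
  · refine ⟨fun t => if t = N then b else a,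
      fun t _ => by dsimp only; split_ifs <;> assumption, ?_⟩
    have hsum : ∑ t ∈ Finset.range N, f (if t = N then b else a) = N * f a := by
      rw [Finset.sum_congr rfl fun t ht => by rw [if_neg (Finset.mem_range.mp ht).ne]]
      simp
    simp [hsum]
  · rintro c ⟨u, hu, rfl⟩
    have hsum : N * f a ≤ ∑ t ∈ Finset.range N, f (u t) := by
      simpa using Finset.sum_le_sum (s := Finset.range N) fun t ht =>
        hfa (u t) (hu t (by rw [Finset.mem_range] at ht; omega))
    linarith [hhb (u N) (hu N N.lt_succ_self)]

theorem stmt_12_general (n : ℕ)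
    (A : Matrix (Fin n) (Fin n) ℝ) (hA : A = Matrix.of fun _ _ => (n : ℝ)⁻¹)
    (B : Matrix (Fin n) (Fin n) ℝ) (hB : LeftStochastic B)
    (γ : ℝ) (T : ℕ) (hT : 1 ≤ T)
    (Q Qf R : Matrix (Fin n) (Fin n) ℝ)
    (x₀ : Fin n → ℝ) (hx₀ : x₀ ∈ stdSimplex ℝ (Fin n)) :
    (∀ u x : ℕ → Fin n → ℝ,
        (∀ t, t < T → u t ∈ stdSimplex ℝ (Fin n)) →
        x 0 = x₀ →
        (∀ t, t < T → x (t + 1) = γ • (A *ᵥ x t) + (1 - γ) • (B *ᵥ u t)) →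
        totalCost T Q Qf R x u =
          x₀ ⬝ᵥ (Q *ᵥ x₀) + (∑ t ∈ Finset.range (T - 1), g γ B R Q (u t))
            + g γ B R Qf (u (T - 1))) ∧
    sInf {c : ℝ | ∃ u x : ℕ → Fin n → ℝ,
        (∀ t, t < T → u t ∈ stdSimplex ℝ (Fin n)) ∧
        x 0 = x₀ ∧
        (∀ t, t < T → x (t + 1) = γ • (A *ᵥ x t) + (1 - γ) • (B *ᵥ u t)) ∧
        c = totalCost T Q Qf R x u} =
      x₀ ⬝ᵥ (Q *ᵥ x₀) + ((T : ℝ) - 1) * sInf (g γ B R Q '' stdSimplex ℝ (Fin n))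
        + sInf (g γ B R Qf '' stdSimplex ℝ (Fin n)) := by
  subst hA
  obtain ⟨N, rfl⟩ : ∃ N, T = N + 1 := ⟨T - 1, by omega⟩
  simp only [Nat.add_sub_cancel]
  have hcost := @totalCost_succ_eq_sum_g_of_leftStochastic n γ B hB N Q Qf R x₀ hx₀
  refine ⟨fun u x => hcost, ?_⟩
  have hΔ := isCompact_stdSimplex ℝ (Fin n)
  obtain ⟨a, ha, hgQ, haQ⟩ :=
    hΔ.exists_sInf_image_eq_and_le ⟨x₀, hx₀⟩ (continuous_g γ B R Q).continuousOn
  obtain ⟨b, hb, hgQf, hbQf⟩ :=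
    hΔ.exists_sInf_image_eq_and_le ⟨x₀, hx₀⟩ (continuous_g γ B R Qf).continuousOn
  rw [hgQ, hgQf, Nat.cast_succ, add_sub_cancel_right,
    ← (isLeast_add_sum_add ha haQ hb hbQf (x₀ ⬝ᵥ (Q *ᵥ x₀)) N).csInf_eq]
  congr 1
  ext c
  constructor
  · rintro ⟨u, x, hu, hx0, hrec, rfl⟩
    exact ⟨u, hu, hcost hu hx0 hrec⟩
  · rintro ⟨u, hu, rfl⟩
    let x : ℕ → Fin n → ℝ := fun t => Nat.rec x₀ (fun t xt =>
      γ • ((of fun _ _ => (n : ℝ)⁻¹ : Matrix (Fin n) (Fin n) ℝ) *ᵥ xt) + (1 - γ) • (B *ᵥ u t)) t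
    exact ⟨u, x, hu, rfl, fun _ _ => rfl, (hcost hu rfl fun _ _ => rfl).symm⟩

theorem stmt_12 (n : ℕ) (hn : 1 ≤ n)
    (A : Matrix (Fin n) (Fin n) ℝ) (hA : A = Matrix.of fun _ _ => (n : ℝ)⁻¹)
    (B : Matrix (Fin n) (Fin n) ℝ) (hB : LeftStochastic B)
    (γ : ℝ) (hγ : γ ∈ Set.Icc (0:ℝ) 1) (T : ℕ) (hT : 1 ≤ T)
    (Q Qf R : Matrix (Fin n) (Fin n) ℝ)
    (x₀ : Fin n → ℝ) (hx₀ : x₀ ∈ stdSimplex ℝ (Fin n)) :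
    (∀ u x : ℕ → Fin n → ℝ,
        (∀ t, t < T → u t ∈ stdSimplex ℝ (Fin n)) →
        x 0 = x₀ →
        (∀ t, t < T → x (t + 1) = γ • (A *ᵥ x t) + (1 - γ) • (B *ᵥ u t)) →
        totalCost T Q Qf R x u =
          x₀ ⬝ᵥ (Q *ᵥ x₀) + (∑ t ∈ Finset.range (T - 1), g γ B R Q (u t))
            + g γ B R Qf (u (T - 1))) ∧
    sInf {c : ℝ | ∃ u x : ℕ → Fin n → ℝ,
        (∀ t, t < T → u t ∈ stdSimplex ℝ (Fin n)) ∧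
        x 0 = x₀ ∧
        (∀ t, t < T → x (t + 1) = γ • (A *ᵥ x t) + (1 - γ) • (B *ᵥ u t)) ∧
        c = totalCost T Q Qf R x u} =
      x₀ ⬝ᵥ (Q *ᵥ x₀) + ((T : ℝ) - 1) * sInf (g γ B R Q '' stdSimplex ℝ (Fin n))
        + sInf (g γ B R Qf '' stdSimplex ℝ (Fin n)) :=
  stmt_12_general n A hA B hB γ T hT Q Qf R x₀ hx₀
end
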